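/- In the MTZ formulation on n ≥ 2 nodes, any assignment of binary variables x_ij satisfying the degree constraints (each node has exactly one outgoing and one incoming selected edge, no self-loops) together with integer variables u with u_1 = 1, 2 ≤ u_i ≤ n for i ≥ 2, and u_i − u_j + n·x_ij ≤ n − 1 for all i, all j ≥ 2, i ≠ j, corresponds to a permutation of the nodes that is a single n-cycle (i.e., contains no subtour avoiding node 1). -/
import Mathlib


/-- MTZ subtour elimination: on `n ≥ 2` nodes, any `x` satisfying the degree
constraints together with MTZ ordering variables `u` corresponds to a
permutation of the nodes forming a single `n`-cycle: the orbit of node 1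
(index `0`) under the permutation covers all nodes. -/
theorem mtz_no_subtour (n : ℕ) (hn : 2 ≤ n)
    (x : Fin n → Fin n → ℝ) (u : Fin n → ℤ)
    (hx01 : ∀ i j, x i j ∈ ({0, 1} : Set ℝ))
    (hself : ∀ i, x i i = 0)
    (hin : ∀ j, ∑ i, x i j = 1)
    (hout : ∀ i, ∑ j, x i j = 1)
    (hu1 : u ⟨0, by omega⟩ = 1)
    (hubound : ∀ i : Fin n, i ≠ ⟨0, by omega⟩ → 2 ≤ u i ∧ u i ≤ n)
    (hmtz : ∀ i j : Fin n, j ≠ ⟨0, by omega⟩ → i ≠ j →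
      u i - u j + n * x i j ≤ n - 1) :
    ∃ σ : Equiv.Perm (Fin n),
      (∀ i j, x i j = 1 ↔ σ i = j) ∧
      (∀ j : Fin n, ∃ k : ℕ, (σ ^ k) ⟨0, by omega⟩ = j) := by
  have hnn : 0 < n := by omega
  set z : Fin n := ⟨0, by omega⟩ with hz
  have hnonneg : ∀ i j, 0 ≤ x i j := by
    intro i j
    have h := hx01 i j
    simp only [Set.mem_insert_iff, Set.mem_singleton_iff] at h
    rcases h with h | h <;> rw [h] <;> norm_num
  -- each row has a unique 1
  have hex : ∀ i, ∃! j, x i j = 1 := by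
    intro i
    obtain ⟨j, hj⟩ : ∃ j, x i j = 1 := by
      by_contra h
      push_neg at h
      have h0 : ∀ j ∈ Finset.univ, x i j = 0 := by
        intro j _
        rcases hx01 i j with h0 | h1
        · exact h0
        · exact absurd h1 (h j)
      have := hout i
      rw [Finset.sum_eq_zero h0] at this
      norm_num at this
    refine ⟨j, hj, fun j' hj' => ?_⟩
    by_contra hne
    have hsub : ({j', j} : Finset (Fin n)) ⊆ Finset.univ := Finset.subset_univ _
    have h2 : (2 : ℝ) ≤ ∑ k, x i k := by
      have := Finset.sum_le_sum_of_subset_of_nonneg hsub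
        (fun k _ _ => hnonneg i k)
      rw [Finset.sum_pair hne, hj, hj'] at this
      linarith
    rw [hout i] at h2; norm_num at h2
  choose f hf hfu using hex
  have hfinj : Function.Injective f := by
    intro a b hab
    by_contra hne
    have hsub : ({a, b} : Finset (Fin n)) ⊆ Finset.univ := Finset.subset_univ _
    have h2 : (2 : ℝ) ≤ ∑ k, x k (f b) := by
      have := Finset.sum_le_sum_of_subset_of_nonneg hsub
        (fun k _ _ => hnonneg k (f b))
      have ha : x a (f b) = 1 := by rw [← hab]; exact hf a
      rw [Finset.sum_pair hne, ha, hf b] at this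
      linarith
    rw [hin (f b)] at h2; norm_num at h2
  let σ : Equiv.Perm (Fin n) := Equiv.ofBijective f
    (Finite.injective_iff_bijective.mp hfinj)
  have hσ : ∀ i, σ i = f i := fun i => rfl
  have hiff : ∀ i j, x i j = 1 ↔ σ i = j := by
    intro i j
    constructor
    · intro h; rw [hσ]; exact (hfu i j h).symm
    · intro h; rw [hσ] at h; rw [← h]; exact hf i
  -- σ has no fixed points, and u increases along σ away from z
  have hstep : ∀ i, σ i ≠ z → u i + 1 ≤ u (σ i) := by
    intro i hiz
    have hij : i ≠ σ i := by
      intro h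
      have := hf i
      rw [hσ] at h
      rw [← h, hself i] at this
      norm_num at this
    have := hmtz i (σ i) hiz hij
    rw [(hiff i (σ i)).mpr rfl] at this
    have : (u i : ℝ) + 1 ≤ u (σ i) := by push_cast at this ⊢; linarith
    exact_mod_cast this
  have hchain : ∀ (k : ℕ) (j : Fin n), (∀ m, 1 ≤ m → m ≤ k → (σ ^ m) j ≠ z) →
      u j + k ≤ u ((σ ^ k) j) := by
    intro k
    induction k with
    | zero => intro j _; simp
    | succ k ih =>
      intro j hj
      have h1 : u j + k ≤ u ((σ ^ k) j) :=
        ih j (fun m h1 h2 => hj m h1 (by omega))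
      have h2 : σ ((σ ^ k) j) = (σ ^ (k + 1)) j := by
        rw [pow_succ']; rfl
      have h3 : (σ ^ (k + 1)) j ≠ z := hj (k + 1) (by omega) le_rfl
      have := hstep ((σ ^ k) j) (by rw [h2]; exact h3)
      rw [h2] at this
      omega
  refine ⟨σ, hiff, ?_⟩
  intro j
  set N := orderOf σ with hN
  have hNpos : 0 < N := orderOf_pos σ
  have hNσ : σ ^ N = 1 := pow_orderOf_eq_one σ
  -- z is in the forward orbit of j
  obtain ⟨m, hm1, hm2, hmz⟩ : ∃ m, 1 ≤ m ∧ m ≤ N ∧ (σ ^ m) j = z := by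
    by_contra h
    push_neg at h
    have := hchain N j (fun m h1 h2 => h m h1 h2)
    rw [hNσ] at this
    simp at this
    omega
  refine ⟨N - m, ?_⟩
  have : (σ ^ (N - m)) ((σ ^ m) j) = (σ ^ N) j := by
    rw [← Equiv.Perm.mul_apply, ← pow_add, Nat.sub_add_cancel hm2]
  rw [hmz] at this
  rw [this, hNσ]
  rfl
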